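/- arXiv:2308.08607 — 2 statements merged into one kernel-verified Lean document; each statement's English description precedes it below -/
import Mathlib

section
/- Let X be a topological space in which every closed subspace is a Baire space (e.g. a locally compact Hausdorff space or a completely metrizable space), and let 𝒫 be a finite partition of X into locally closed subsets. Then for any two pieces A, B ∈ 𝒫, if closure(A) = closure(B) then A = B. Consequently the relation A ≤ B defined by A ⊆ closure(B) is a partial order on 𝒫. -/
/-- In a space whose closed subspaces are all Baire, in a finite partition into
locally closed pieces, two pieces with the same closure coincide; consequently
the relation `A ≤ B ↔ A ⊆ closure B` is antisymmetric (hence a partial order). -/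
theorem finite_partition_locallyClosed_closure_eq_iff
    {X : Type*} [TopologicalSpace X]
    (hBaire : ∀ C : Set X, IsClosed C → BaireSpace C)
    (P : Finset (Set X))
    (hne : ∀ A ∈ P, A.Nonempty)
    (hdisj : ∀ A ∈ P, ∀ B ∈ P, A ≠ B → Disjoint A B)
    (hcover : ⋃₀ (↑P : Set (Set X)) = Set.univ)
    (hlc : ∀ A ∈ P, IsLocallyClosed A) :
    (∀ A ∈ P, ∀ B ∈ P, closure A = closure B → A = B) ∧
    (∀ A ∈ P, ∀ B ∈ P, A ⊆ closure B → B ⊆ closure A → A = B) := by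
  have key : ∀ A ∈ P, ∀ B ∈ P, closure A = closure B → A = B := by
    intro A hA B hB hcl
    by_contra hne'
    -- B is locally closed: B = U ∩ Z with U open, Z closed
    obtain ⟨U, Z, hU, hZ, hBUZ⟩ := hlc B hB
    -- B nonempty, pick x ∈ B
    obtain ⟨x, hxB⟩ := hne B hB
    -- x ∈ closure B = closure A, x ∈ U, so U meets A
    have hxU : x ∈ U := by rw [hBUZ] at hxB; exact hxB.1
    have hxclA : x ∈ closure A := by rw [hcl]; exact subset_closure hxB
    obtain ⟨y, hyU, hyA⟩ := mem_closure_iff.mp hxclA U hU hxU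
    -- y ∈ A ⊆ closure A = closure B ⊆ Z, and y ∈ U, so y ∈ B
    have hyZ : y ∈ Z := by
      have : closure B ⊆ Z := closure_minimal (by rw [hBUZ]; exact Set.inter_subset_right) hZ
      exact this (hcl ▸ subset_closure hyA)
    have hyB : y ∈ B := by rw [hBUZ]; exact ⟨hyU, hyZ⟩
    exact (hdisj A hA B hB hne').le_bot ⟨hyA, hyB⟩
  refine ⟨key, fun A hA B hB hAB hBA => ?_⟩
  exact key A hA B hB (le_antisymm (closure_minimal hAB isClosed_closure)
    (closure_minimal hBA isClosed_closure))
end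

section
/- Let Γ be a group acting by homeomorphisms on a locally compact, second countable, Hausdorff space Ω, and suppose the action has infinite image in Homeo(Ω). Then the action is properly discontinuous (i.e. for every compact K ⊆ Ω the set {γ ∈ Γ : γ·K ∩ K ≠ ∅} has finite image in Homeo(Ω)) if and only if no two points of Ω are dynamically related: there exist no x, x′ ∈ Ω, no sequence x_n → x in Ω and no sequence γ_n ∈ Γ whose images in Homeo(Ω) are pairwise distinct, with γ_n · x_n → x′. -/
/-- For an action with infinite image by homeomorphisms of a locally compact second
countable Hausdorff space, proper discontinuity is equivalent to the absence of
dynamically related pairs of points. -/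
theorem properlyDiscontinuous_iff_no_dynamical_relation
    {Γ Ω : Type*} [Group Γ] [TopologicalSpace Ω]
    [LocallyCompactSpace Ω] [SecondCountableTopology Ω] [T2Space Ω]
    [MulAction Γ Ω]
    (hcont : ∀ γ : Γ, Continuous fun x : Ω => γ • x)
    (hinf : (Set.range fun γ : Γ => (fun x : Ω => γ • x)).Infinite) :
    (∀ K : Set Ω, IsCompact K →
        ((fun γ : Γ => (fun x : Ω => γ • x)) ''
          {γ : Γ | ((γ • ·) '' K ∩ K).Nonempty}).Finite) ↔
    ¬ ∃ (x x' : Ω) (xs : ℕ → Ω) (γ : ℕ → Γ),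
        Filter.Tendsto xs Filter.atTop (nhds x) ∧
        Function.Injective (fun n => (fun y : Ω => γ n • y)) ∧
        Filter.Tendsto (fun n => γ n • xs n) Filter.atTop (nhds x') := by
  set f : Γ → (Ω → Ω) := fun γ => (fun x : Ω => γ • x) with hf
  constructor
  · rintro hPD ⟨x, x', xs, γ, hxs, hinj, hγxs⟩
    obtain ⟨L, hLx, hLc⟩ := exists_compact_mem_nhds x
    obtain ⟨M, hMx, hMc⟩ := exists_compact_mem_nhds x'
    have hKc : IsCompact (L ∪ M) := hLx.union hMx
    have hfin := hPD (L ∪ M) hKc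
    have h1 : ∀ᶠ n in Filter.atTop, xs n ∈ L := hxs hLc
    have h2 : ∀ᶠ n in Filter.atTop, γ n • xs n ∈ M := hγxs hMc
    obtain ⟨N, hN⟩ := Filter.eventually_atTop.mp (h1.and h2)
    have hsub : Set.range (fun n : ℕ => f (γ (N + n))) ⊆
        f '' {δ : Γ | ((δ • ·) '' (L ∪ M) ∩ (L ∪ M)).Nonempty} := by
      rintro - ⟨n, rfl⟩
      refine ⟨γ (N + n), ?_, rfl⟩
      obtain ⟨hL, hM⟩ := hN (N + n) (Nat.le_add_right N n)
      exact ⟨γ (N + n) • xs (N + n),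
        ⟨xs (N + n), Or.inl hL, rfl⟩, Or.inr hM⟩
    have hginj : Function.Injective (fun n : ℕ => f (γ (N + n))) := by
      intro a b hab
      have := hinj hab
      omega
    exact Set.infinite_range_of_injective hginj (hfin.subset hsub)
  · intro hno K hK
    by_contra hfin
    have hinfS : (f '' {δ : Γ | ((δ • ·) '' K ∩ K).Nonempty}).Infinite := hfin
    set e := hinfS.natEmbedding with he
    have hch : ∀ n : ℕ, ∃ δ : Γ, δ ∈ {δ : Γ | ((δ • ·) '' K ∩ K).Nonempty} ∧
        f δ = (e n : Ω → Ω) := fun n => (e n).2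
    choose γ hγS hγf using hch
    have hfinj : Function.Injective (fun n : ℕ => f (γ n)) := by
      intro a b hab
      simp only [hγf] at hab
      exact e.injective (Subtype.ext hab)
    have hpt : ∀ n : ℕ, ∃ y, y ∈ (γ n • ·) '' K ∩ K := fun n => hγS n
    choose y hy using hpt
    have hk : ∀ n : ℕ, ∃ k ∈ K, γ n • k = y n := fun n => (hy n).1
    choose k hkK hky using hk
    have hyK : ∀ n, y n ∈ K := fun n => (hy n).2
    obtain ⟨x, hxK, φ, hφ, hkφ⟩ := hK.tendsto_subseq hkK
    have hmem : ∀ m, γ (φ m) • k (φ m) ∈ K := fun m => (hky (φ m)) ▸ hyK (φ m)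
    obtain ⟨x', hx'K, ψ, hψ, hψt⟩ := hK.tendsto_subseq hmem
    refine hno ⟨x, x', fun n => k (φ (ψ n)), fun n => γ (φ (ψ n)), ?_, ?_, ?_⟩
    · exact hkφ.comp hψ.tendsto_atTop
    · exact hfinj.comp (hφ.injective.comp hψ.injective)
    · exact hψt
end
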